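/- Two defining triples (G₁, H₁, θ₁) and (G₂, H₂, θ₂) on finite vertex sets are equivalent (there is a vertex bijection T intertwining both pairs of adjacency matrices and compatible with θ₁, θ₂) if and only if the associated rank-2 graphs Λ₁ and Λ₂ are isomorphic as ℕ²-graded categories. -/

import Mathlib

open CategoryTheory

/-- A 2-graph (rank-2 graph): a category with an `ℕ²`-valued degree functor
satisfying the unique factorisation property. -/
structure TwoGraphStr (Λ : Type*) [Category Λ] where
  d : ∀ {x y : Λ}, (x ⟶ y) → ℕ × ℕ
  d_id : ∀ x : Λ, d (𝟙 x) = 0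
  d_comp : ∀ {x y z : Λ} (f : x ⟶ y) (g : y ⟶ z), d (f ≫ g) = d f + d g
  factor : ∀ {x z : Λ} (h : x ⟶ z) (m n : ℕ × ℕ), d h = m + n →
    ∃! p : Σ y : Λ, (x ⟶ y) × (y ⟶ z),
      d p.2.1 = m ∧ d p.2.2 = n ∧ p.2.1 ≫ p.2.2 = h

/-- A defining triple: two 1-graphs without multiple edges, sources or sinks on a
common finite vertex set (edges are `(source, target)` pairs), together with a
range/source-compatible bijection `θ : E₁ ⋆ E₂ → E₂ ⋆ E₁` between composable
pairs (whose existence encodes commutation of the adjacency matrices). -/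
structure Triple (V : Type*) [Fintype V] [DecidableEq V] where
  E₁ : Finset (V × V)
  E₂ : Finset (V × V)
  noSourceSink₁ : ∀ v : V, (∃ w, (v, w) ∈ E₁) ∧ (∃ w, (w, v) ∈ E₁)
  noSourceSink₂ : ∀ v : V, (∃ w, (v, w) ∈ E₂) ∧ (∃ w, (w, v) ∈ E₂)
  θ : (V × V) × (V × V) → (V × V) × (V × V)
  θ_compat : ∀ x : (V × V) × (V × V), x.1 ∈ E₁ → x.2 ∈ E₂ → x.1.1 = x.2.2 →
    (θ x).1 ∈ E₂ ∧ (θ x).2 ∈ E₁ ∧ (θ x).1.1 = (θ x).2.2 ∧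
    (θ x).1.2 = x.1.2 ∧ (θ x).2.1 = x.2.1
  θ_bij : Set.BijOn θ {x | x.1 ∈ E₁ ∧ x.2 ∈ E₂ ∧ x.1.1 = x.2.2}
    {y | y.1 ∈ E₂ ∧ y.2 ∈ E₁ ∧ y.1.1 = y.2.2}

/-- Equivalence of triples: a vertex bijection intertwining both pairs of
adjacency matrices, compatible with the factorisation bijections. -/
def TripleEquiv {V : Type*} [Fintype V] [DecidableEq V] (T₁ T₂ : Triple V) : Prop :=
  ∃ σ : Equiv.Perm V,
    (∀ p : V × V, p ∈ T₂.E₁ ↔ (σ p.1, σ p.2) ∈ T₁.E₁) ∧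
    (∀ p : V × V, p ∈ T₂.E₂ ↔ (σ p.1, σ p.2) ∈ T₁.E₂) ∧
    (∀ x : (V × V) × (V × V), x.1 ∈ T₂.E₁ → x.2 ∈ T₂.E₂ → x.1.1 = x.2.2 →
      T₁.θ ((σ x.1.1, σ x.1.2), (σ x.2.1, σ x.2.2)) =
        ((σ (T₂.θ x).1.1, σ (T₂.θ x).1.2), (σ (T₂.θ x).2.1, σ (T₂.θ x).2.2)))

/-- `T` is a defining triple of the 2-graph `G` on `Λ`: objects are identified
with the vertices, degree-(1,0) (resp. (0,1)) morphisms with the edges of the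
first (resp. second) graph (uniquely, as there are no multiple edges), and the
factorisation of degree-(1,1) morphisms is governed by `θ`. -/
def IsDefiningTriple {V : Type*} [Fintype V] [DecidableEq V]
    {Λ : Type*} [Category Λ] (G : TwoGraphStr Λ) (T : Triple V) : Prop :=
  ∃ ob : V ≃ Λ,
    (∀ a b : V, ((a, b) ∈ T.E₁ ↔ ∃ f : ob a ⟶ ob b, G.d f = (1, 0))) ∧
    (∀ a b : V, ∀ f g : ob a ⟶ ob b, G.d f = (1, 0) → G.d g = (1, 0) → f = g) ∧
    (∀ a b : V, ((a, b) ∈ T.E₂ ↔ ∃ f : ob a ⟶ ob b, G.d f = (0, 1))) ∧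
    (∀ a b : V, ∀ f g : ob a ⟶ ob b, G.d f = (0, 1) → G.d g = (0, 1) → f = g) ∧
    (∀ (x : (V × V) × (V × V)) (h₁ : x.1 ∈ T.E₁) (h₂ : x.2 ∈ T.E₂)
      (hc : x.1.1 = x.2.2)
      (me : ob x.1.1 ⟶ ob x.1.2) (mf : ob x.2.1 ⟶ ob x.2.2)
      (me' : ob (T.θ x).2.1 ⟶ ob (T.θ x).2.2)
      (mf' : ob (T.θ x).1.1 ⟶ ob (T.θ x).1.2),
      G.d me = (1, 0) → G.d mf = (0, 1) → G.d me' = (1, 0) → G.d mf' = (0, 1) →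
      mf ≫ eqToHom (congrArg ob hc.symm) ≫ me =
        eqToHom (congrArg ob (T.θ_compat x h₁ h₂ hc).2.2.2.2.symm) ≫ me' ≫
          eqToHom (congrArg ob (T.θ_compat x h₁ h₂ hc).2.2.1.symm) ≫ mf' ≫
            eqToHom (congrArg ob (T.θ_compat x h₁ h₂ hc).2.2.2.1))


/-!
A 2-graph is generated by its edges (morphisms of degree `(1,0)` or `(0,1)`) subject to the
commuting squares `f ≫ e = e' ≫ f'`, and for a defining triple these squares are exactly the
graph of `θ`. Hence a vertex bijection respecting edges and `θ` extends to a degree-preserving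
functor: peel off a first edge and recurse on the total degree; unique factorisation reduces
well-definedness to a single square. Conversely a degree-preserving isomorphism maps edges to
edges and squares to squares, so its object map is an equivalence of triples.
-/

namespace TwoGraphStr

variable {Λ : Type*} [Category Λ] (G : TwoGraphStr Λ)

def size {x y : Λ} (f : x ⟶ y) : ℕ := (G.d f).1 + (G.d f).2

lemma size_comp {x y z : Λ} (f : x ⟶ y) (g : y ⟶ z) :
    G.size (f ≫ g) = G.size f + G.size g := by
  simp only [size, G.d_comp, Prod.fst_add, Prod.snd_add]; omega

lemma size_eq_one_iff {x y : Λ} (f : x ⟶ y) :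
    G.size f = 1 ↔ G.d f = (1, 0) ∨ G.d f = (0, 1) := by
  simp only [size, Prod.ext_iff]; omega

lemma d_eqToHom {x y : Λ} (h : x = y) : G.d (eqToHom h) = 0 := by
  subst h; exact G.d_id x

lemma factor_unique {x w w' z : Λ} {p : x ⟶ w} {k : w ⟶ z} {p' : x ⟶ w'} {k' : w' ⟶ z}
    (h : p ≫ k = p' ≫ k') (hd : G.d p = G.d p') :
    (⟨w, p, k⟩ : Σ v, (x ⟶ v) × (v ⟶ z)) = ⟨w', p', k'⟩ := by
  have hk : G.d k = G.d k' := by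
    have := congrArg G.d h
    rwa [G.d_comp, G.d_comp, hd, add_right_inj] at this
  exact (G.factor _ _ _ (G.d_comp p k)).unique ⟨rfl, rfl, rfl⟩ ⟨hd.symm, hk.symm, h.symm⟩

lemma eq_eqToHom_of_size_eq_zero {x y : Λ} (f : x ⟶ y) (hf : G.size f = 0) :
    ∃ h : x = y, f = eqToHom h := by
  have hd : G.d f = 0 := by simp only [size] at hf; ext <;> simp <;> omega
  have := G.factor_unique (p := f) (k := 𝟙 y) (p' := 𝟙 x) (k' := f) (by simp)
    (by rw [hd, G.d_id])
  cases this
  exact ⟨rfl, rfl⟩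

lemma exists_size_one_comp {x z : Λ} (f : x ⟶ z) (hf : G.size f ≠ 0) :
    ∃ p : Σ y, (x ⟶ y) × (y ⟶ z), G.size p.2.1 = 1 ∧ p.2.1 ≫ p.2.2 = f := by
  have : G.d f = (1, 0) + (G.d f - (1, 0)) ∨ G.d f = (0, 1) + (G.d f - (0, 1)) := by
    simp only [size] at hf
    simp only [Prod.ext_iff, Prod.fst_add, Prod.snd_add, Prod.fst_sub, Prod.snd_sub]
    omega
  rcases this with h | h <;>
  · obtain ⟨p, ⟨hp, -, hpf⟩, -⟩ := G.factor f _ _ h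
    exact ⟨p, by simp [size, hp], hpf⟩

theorem hom_induction {motive : ∀ {x y : Λ}, (x ⟶ y) → Prop} (id : ∀ x, motive (𝟙 x))
    (comp : ∀ {x y z : Λ} (a : x ⟶ y) (g : y ⟶ z), G.size a = 1 → motive g → motive (a ≫ g))
    {x y : Λ} (f : x ⟶ y) : motive f := by
  obtain ⟨n, hn⟩ : ∃ n, G.size f = n := ⟨_, rfl⟩
  induction n generalizing x y with
  | zero =>
    obtain ⟨rfl, rfl⟩ := G.eq_eqToHom_of_size_eq_zero f hn
    exact id x
  | succ n ih =>
    obtain ⟨⟨w, a, g⟩, ha, rfl⟩ := G.exists_size_one_comp f (by omega)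
    dsimp only at ha hn
    rw [G.size_comp, ha] at hn
    exact comp a g ha (ih g (by omega))

lemma eq_or_exists_square {x y y' z : Λ} {a : x ⟶ y} {g : y ⟶ z} {a' : x ⟶ y'} {g' : y' ⟶ z}
    (ha : G.size a = 1) (ha' : G.size a' = 1) (h : a ≫ g = a' ≫ g') :
    (⟨y, a, g⟩ : Σ v, (x ⟶ v) × (v ⟶ z)) = ⟨y', a', g'⟩ ∨
      ∃ (w : Λ) (b : y ⟶ w) (b' : y' ⟶ w) (k : w ⟶ z), G.size b = 1 ∧ G.size b' = 1 ∧
        a ≫ b = a' ≫ b' ∧ g = b ≫ k ∧ g' = b' ≫ k := by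
  by_cases hd : G.d a = G.d a'
  · exact Or.inl (G.factor_unique h hd)
  right
  have hdeg := congrArg G.d h
  rw [G.d_comp, G.d_comp] at hdeg
  rw [size_eq_one_iff] at ha ha'
  have hsplit : G.d g = G.d a' + (G.d g - G.d a') ∧ G.d g' = G.d a + (G.d g' - G.d a) := by
    simp only [Prod.ext_iff, Prod.fst_add, Prod.snd_add, Prod.fst_sub, Prod.snd_sub] at hdeg ⊢
    rcases ha with ha | ha <;> rcases ha' with ha' | ha' <;>
      simp only [ha, ha', Prod.ext_iff, not_and_or, not_true_eq_false] at hd hdeg ⊢ <;> omega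
  obtain ⟨⟨w, b, k⟩, ⟨hb, -, rfl⟩, -⟩ := G.factor g _ _ hsplit.1
  obtain ⟨⟨w', b', k'⟩, ⟨hb', -, rfl⟩, -⟩ := G.factor g' _ _ hsplit.2
  dsimp only at hb hb'
  obtain ⟨rfl, hbk⟩ := Sigma.mk.inj_iff.mp <| G.factor_unique (p := a ≫ b) (p' := a' ≫ b')
    (by simpa using h) (by rw [G.d_comp, G.d_comp, hb, hb', add_comm])
  obtain ⟨hsq, rfl⟩ := Prod.mk_inj.mp (eq_of_heq hbk)
  exact ⟨w, b, b', k, (G.size_eq_one_iff b).mpr (hb ▸ ha'), (G.size_eq_one_iff b').mpr (hb' ▸ ha),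
    hsq, rfl, rfl⟩

lemma comp_eq_comp_cases {x y y' z : Λ} {a : x ⟶ y} {b : y ⟶ z} {a' : x ⟶ y'} {b' : y' ⟶ z}
    (ha : G.size a = 1) (hb : G.size b = 1) (ha' : G.size a' = 1) (hb' : G.size b' = 1)
    (h : a ≫ b = a' ≫ b') :
    (⟨y, a, b⟩ : Σ v, (x ⟶ v) × (v ⟶ z)) = ⟨y', a', b'⟩ ∨
      (G.d a = (0, 1) ∧ G.d b = (1, 0) ∧ G.d a' = (1, 0) ∧ G.d b' = (0, 1)) ∨
      (G.d a = (1, 0) ∧ G.d b = (0, 1) ∧ G.d a' = (0, 1) ∧ G.d b' = (1, 0)) := by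
  by_cases hd : G.d a = G.d a'
  · exact Or.inl (G.factor_unique h hd)
  right
  have hdeg := congrArg G.d h
  rw [G.d_comp, G.d_comp] at hdeg
  rw [size_eq_one_iff] at ha hb ha' hb'
  rcases ha with ha | ha <;> rcases hb with hb | hb <;> rcases ha' with ha' | ha' <;>
    rcases hb' with hb' | hb' <;> simp_all [Prod.ext_iff]

lemma d_map_of_comp_eq_id {Λ' : Type*} [Category Λ'] (G' : TwoGraphStr Λ') {Φ : Λ ⥤ Λ'}
    {Ψ : Λ' ⥤ Λ} (hΦ : ∀ {x y : Λ} (f : x ⟶ y), G'.d (Φ.map f) = G.d f) (h : Ψ ⋙ Φ = 𝟭 Λ')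
    {x y : Λ'} (g : x ⟶ y) : G.d (Ψ.map g) = G'.d g := by
  rw [← hΦ, ← Functor.comp_map, Functor.congr_hom h g, G'.d_comp, G'.d_comp, G'.d_eqToHom,
    G'.d_eqToHom]
  simp

theorem functor_ext {Λ' : Type*} [Category Λ'] {G' : TwoGraphStr Λ'}
    (hG' : ∀ {x y : Λ'} (f g : x ⟶ y), G'.size f = 1 → G'.d f = G'.d g → f = g)
    {F H : Λ ⥤ Λ'} (hobj : ∀ x, F.obj x = H.obj x)
    (hF : ∀ {x y : Λ} (f : x ⟶ y), G'.d (F.map f) = G.d f)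
    (hH : ∀ {x y : Λ} (f : x ⟶ y), G'.d (H.map f) = G.d f) : F = H := by
  refine CategoryTheory.Functor.ext hobj fun x y f => ?_
  induction f using G.hom_induction with
  | id x => simp
  | comp a g ha ih =>
    have hFa : G'.size (F.map a) = 1 := by simpa only [size, hF] using ha
    have hFa' : F.map a = eqToHom (hobj _) ≫ H.map a ≫ eqToHom (hobj _).symm :=
      hG' _ _ hFa (by simp only [G'.d_comp, G'.d_eqToHom, hF, hH, zero_add, add_zero])
    rw [F.map_comp, H.map_comp, ih, hFa']
    simp

section Lift

variable {C : Type*} [Category C] {F₀ : Λ → C}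

def RespectsSquares (φ : ∀ {x y : Λ} (a : x ⟶ y), G.size a = 1 → (F₀ x ⟶ F₀ y)) : Prop :=
  ∀ {x y y' z : Λ} (a : x ⟶ y) (b : y ⟶ z) (a' : x ⟶ y') (b' : y' ⟶ z) (ha : G.size a = 1)
    (hb : G.size b = 1) (ha' : G.size a' = 1) (hb' : G.size b' = 1),
    a ≫ b = a' ≫ b' → φ a ha ≫ φ b hb = φ a' ha' ≫ φ b' hb'

variable (F₀) (φ : ∀ {x y : Λ} (a : x ⟶ y), G.size a = 1 → (F₀ x ⟶ F₀ y))

noncomputable def liftMap {x y : Λ} (f : x ⟶ y) : F₀ x ⟶ F₀ y :=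
  if hf : G.size f = 0 then eqToHom (congrArg F₀ (G.eq_eqToHom_of_size_eq_zero f hf).fst)
  else
    φ _ (G.exists_size_one_comp f hf).choose_spec.1 ≫
      liftMap (G.exists_size_one_comp f hf).choose.2.2
termination_by G.size f
decreasing_by
  have h := congrArg G.size (G.exists_size_one_comp f hf).choose_spec.2
  rw [G.size_comp, (G.exists_size_one_comp f hf).choose_spec.1] at h
  omega

lemma liftMap_id (x : Λ) : G.liftMap F₀ φ (𝟙 x) = 𝟙 (F₀ x) := by
  rw [liftMap, dif_pos (by simp [size, G.d_id])]
  simp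

lemma exists_liftMap_eq {x z : Λ} (f : x ⟶ z) (hf : G.size f ≠ 0) :
    ∃ (y : Λ) (a : x ⟶ y) (g : y ⟶ z) (ha : G.size a = 1),
      a ≫ g = f ∧ G.liftMap F₀ φ f = φ a ha ≫ G.liftMap F₀ φ g := by
  rw [liftMap, dif_neg hf]
  exact ⟨_, _, _, _, (G.exists_size_one_comp f hf).choose_spec.2, rfl⟩

variable {φ}

lemma liftMap_comp_of_size_eq_one (hφ : G.RespectsSquares φ) {x y z : Λ} (a : x ⟶ y)
    (g : y ⟶ z) (ha : G.size a = 1) :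
    G.liftMap F₀ φ (a ≫ g) = φ a ha ≫ G.liftMap F₀ φ g := by
  obtain ⟨n, hn⟩ : ∃ n, G.size g = n := ⟨_, rfl⟩
  induction n using Nat.strong_induction_on generalizing x y z with
  | _ n ih =>
  obtain ⟨v, a₀, g₀, ha₀, hag, hL⟩ :=
    G.exists_liftMap_eq F₀ φ (a ≫ g) (by rw [size_comp]; omega)
  rw [hL]
  rcases G.eq_or_exists_square ha₀ ha hag with h | ⟨w, b₀, b, k, hb₀, hb, hsq, rfl, rfl⟩
  · cases h; rfl
  · have hk : G.size k < n := by rw [← hn, size_comp]; omega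
    rw [ih _ hk b₀ k hb₀ rfl, ih _ hk b k hb rfl, reassoc_of% (hφ a₀ b₀ a b ha₀ hb₀ ha hb hsq)]

lemma liftMap_comp (hφ : G.RespectsSquares φ) {x y z : Λ} (f : x ⟶ y) (g : y ⟶ z) :
    G.liftMap F₀ φ (f ≫ g) = G.liftMap F₀ φ f ≫ G.liftMap F₀ φ g := by
  induction f using G.hom_induction with
  | id x => simp [liftMap_id]
  | comp a f ha ih =>
    rw [Category.assoc, G.liftMap_comp_of_size_eq_one F₀ hφ a _ ha,
      G.liftMap_comp_of_size_eq_one F₀ hφ a f ha, ih, Category.assoc]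

noncomputable def lift (hφ : G.RespectsSquares φ) : Λ ⥤ C where
  obj := F₀
  map := G.liftMap F₀ φ
  map_id := G.liftMap_id F₀ φ
  map_comp := G.liftMap_comp F₀ hφ

end Lift

lemma d_liftMap {Λ' : Type*} [Category Λ'] (G' : TwoGraphStr Λ') (F₀ : Λ → Λ')
    {φ : ∀ {x y : Λ} (a : x ⟶ y), G.size a = 1 → (F₀ x ⟶ F₀ y)} (hφ : G.RespectsSquares φ)
    (hφd : ∀ {x y : Λ} (a : x ⟶ y) (ha : G.size a = 1), G'.d (φ a ha) = G.d a)
    {x y : Λ} (f : x ⟶ y) : G'.d (G.liftMap F₀ φ f) = G.d f := by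
  induction f using G.hom_induction with
  | id x => rw [liftMap_id, G'.d_id, G.d_id]
  | comp a g ha ih =>
    rw [G.liftMap_comp_of_size_eq_one F₀ hφ a g ha, G'.d_comp, G.d_comp, hφd, ih]

end TwoGraphStr

namespace Triple

variable {V : Type*} [Fintype V] [DecidableEq V]

lemma exists_θ_eq (T : Triple V) {a b c : V} (hbc : (b, c) ∈ T.E₁) (hab : (a, b) ∈ T.E₂) :
    ∃ m, T.θ ((b, c), (a, b)) = ((m, c), (a, m)) := by
  obtain ⟨-, -, h₃, h₄, h₅⟩ := T.θ_compat ((b, c), (a, b)) hbc hab rfl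
  generalize T.θ ((b, c), (a, b)) = r at h₃ h₄ h₅ ⊢
  obtain ⟨⟨m, c'⟩, ⟨a', m'⟩⟩ := r
  dsimp only at h₃ h₄ h₅
  subst h₃ h₄ h₅
  exact ⟨m, rfl⟩

lemma mem_of_θ_eq (T : Triple V) {a b c m : V} (hbc : (b, c) ∈ T.E₁) (hab : (a, b) ∈ T.E₂)
    (hθ : T.θ ((b, c), (a, b)) = ((m, c), (a, m))) : (m, c) ∈ T.E₂ ∧ (a, m) ∈ T.E₁ := by
  have h := T.θ_compat ((b, c), (a, b)) hbc hab rfl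
  rw [hθ] at h
  exact ⟨h.1, h.2.1⟩

/-- By `θ_compat`, every composable pair `((b, c), (a, b))` has a `θ`-image of the form
`((m, c), (a, m))`, so `θ_eq` says that `s` intertwines the two `θ`s. -/
structure IsHom (T T' : Triple V) (s : V → V) : Prop where
  mem_E₁ : ∀ {a b : V}, (a, b) ∈ T.E₁ → (s a, s b) ∈ T'.E₁
  mem_E₂ : ∀ {a b : V}, (a, b) ∈ T.E₂ → (s a, s b) ∈ T'.E₂
  θ_eq : ∀ {a b c m : V}, (b, c) ∈ T.E₁ → (a, b) ∈ T.E₂ →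
    T.θ ((b, c), (a, b)) = ((m, c), (a, m)) →
    T'.θ ((s b, s c), (s a, s b)) = ((s m, s c), (s a, s m))

end Triple

theorem tripleEquiv_iff_isHom {V : Type*} [Fintype V] [DecidableEq V] {T₁ T₂ : Triple V} :
    TripleEquiv T₁ T₂ ↔ ∃ σ : Equiv.Perm V, T₂.IsHom T₁ σ ∧ T₁.IsHom T₂ σ.symm := by
  constructor
  · rintro ⟨σ, h₁, h₂, hθ⟩
    refine ⟨σ, ⟨(h₁ _).mp, (h₂ _).mp, fun {a b c m} hbc hab hm => ?_⟩,
      ⟨fun h => (h₁ _).mpr (by simpa using h), fun h => (h₂ _).mpr (by simpa using h),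
        fun {a b c m} hbc hab hm => ?_⟩⟩
    · simpa [hm] using hθ ((b, c), (a, b)) hbc hab rfl
    · have h := hθ ((σ.symm b, σ.symm c), (σ.symm a, σ.symm b)) ((h₁ _).mpr (by simpa))
        ((h₂ _).mpr (by simpa)) rfl
      simp only [Equiv.apply_symm_apply, hm, Prod.ext_iff] at h
      obtain ⟨⟨h₁, h₂⟩, h₃, h₄⟩ := h
      simp only [Prod.ext_iff, Equiv.eq_symm_apply]
      exact ⟨⟨h₁.symm, h₂.symm⟩, h₃.symm, h₄.symm⟩
  · rintro ⟨σ, hσ, hσ'⟩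
    refine ⟨σ, fun p => ⟨hσ.mem_E₁, fun h => by simpa using hσ'.mem_E₁ h⟩,
      fun p => ⟨hσ.mem_E₂, fun h => by simpa using hσ'.mem_E₂ h⟩, ?_⟩
    rintro ⟨⟨b, c⟩, ⟨a, b'⟩⟩ hbc hab (rfl : b = b')
    obtain ⟨m, hm⟩ := T₂.exists_θ_eq hbc hab
    rw [hm]
    exact hσ.θ_eq hbc hab hm

structure DefiningTriple {V : Type*} [Fintype V] [DecidableEq V]
    {Λ : Type*} [Category Λ] (G : TwoGraphStr Λ) (T : Triple V) where
  ob : V ≃ Λ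
  mem₁ : ∀ a b : V, ((a, b) ∈ T.E₁ ↔ ∃ f : ob a ⟶ ob b, G.d f = (1, 0))
  uniq₁ : ∀ a b : V, ∀ f g : ob a ⟶ ob b, G.d f = (1, 0) → G.d g = (1, 0) → f = g
  mem₂ : ∀ a b : V, ((a, b) ∈ T.E₂ ↔ ∃ f : ob a ⟶ ob b, G.d f = (0, 1))
  uniq₂ : ∀ a b : V, ∀ f g : ob a ⟶ ob b, G.d f = (0, 1) → G.d g = (0, 1) → f = g
  theta : ∀ (x : (V × V) × (V × V)) (h₁ : x.1 ∈ T.E₁) (h₂ : x.2 ∈ T.E₂)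
      (hc : x.1.1 = x.2.2)
      (me : ob x.1.1 ⟶ ob x.1.2) (mf : ob x.2.1 ⟶ ob x.2.2)
      (me' : ob (T.θ x).2.1 ⟶ ob (T.θ x).2.2)
      (mf' : ob (T.θ x).1.1 ⟶ ob (T.θ x).1.2),
      G.d me = (1, 0) → G.d mf = (0, 1) → G.d me' = (1, 0) → G.d mf' = (0, 1) →
      mf ≫ eqToHom (congrArg ob hc.symm) ≫ me =
        eqToHom (congrArg ob (T.θ_compat x h₁ h₂ hc).2.2.2.2.symm) ≫ me' ≫
          eqToHom (congrArg ob (T.θ_compat x h₁ h₂ hc).2.2.1.symm) ≫ mf' ≫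
            eqToHom (congrArg ob (T.θ_compat x h₁ h₂ hc).2.2.2.1)

lemma IsDefiningTriple.nonempty {V : Type*} [Fintype V] [DecidableEq V]
    {Λ : Type*} [Category Λ] {G : TwoGraphStr Λ} {T : Triple V} (h : IsDefiningTriple G T) :
    Nonempty (DefiningTriple G T) :=
  let ⟨ob, h₁, h₂, h₃, h₄, h₅⟩ := h
  ⟨⟨ob, h₁, h₂, h₃, h₄, h₅⟩⟩

namespace DefiningTriple

variable {V : Type*} [Fintype V] [DecidableEq V] {Λ Λ' : Type*} [Category Λ] [Category Λ']
  {G : TwoGraphStr Λ} {G' : TwoGraphStr Λ'} {T T' : Triple V}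
  (D : DefiningTriple G T) (D' : DefiningTriple G' T')

lemma mem_E₁_iff (x y : Λ) :
    (D.ob.symm x, D.ob.symm y) ∈ T.E₁ ↔ ∃ f : x ⟶ y, G.d f = (1, 0) := by
  obtain ⟨a, rfl⟩ := D.ob.surjective x
  obtain ⟨b, rfl⟩ := D.ob.surjective y
  simpa using D.mem₁ a b

lemma mem_E₂_iff (x y : Λ) :
    (D.ob.symm x, D.ob.symm y) ∈ T.E₂ ↔ ∃ f : x ⟶ y, G.d f = (0, 1) := by
  obtain ⟨a, rfl⟩ := D.ob.surjective x
  obtain ⟨b, rfl⟩ := D.ob.surjective y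
  simpa using D.mem₂ a b

lemma hom_ext_of_size_eq_one (D : DefiningTriple G T) {x y : Λ} (f g : x ⟶ y) (hf : G.size f = 1)
    (hfg : G.d f = G.d g) : f = g := by
  obtain ⟨a, rfl⟩ := D.ob.surjective x
  obtain ⟨b, rfl⟩ := D.ob.surjective y
  rcases (G.size_eq_one_iff f).mp hf with h | h
  · exact D.uniq₁ a b f g h (hfg ▸ h)
  · exact D.uniq₂ a b f g h (hfg ▸ h)

lemma comp_eq_comp_of_θ_eq {a b c m : V} (hbc : (b, c) ∈ T.E₁) (hab : (a, b) ∈ T.E₂)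
    (hθ : T.θ ((b, c), (a, b)) = ((m, c), (a, m)))
    {f : D.ob a ⟶ D.ob b} {e : D.ob b ⟶ D.ob c} {e' : D.ob a ⟶ D.ob m} {f' : D.ob m ⟶ D.ob c}
    (hf : G.d f = (0, 1)) (he : G.d e = (1, 0)) (he' : G.d e' = (1, 0)) (hf' : G.d f' = (0, 1)) :
    f ≫ e = e' ≫ f' := by
  have h₁₁ : (T.θ ((b, c), (a, b))).1.1 = m := by rw [hθ]
  have h₁₂ : (T.θ ((b, c), (a, b))).1.2 = c := by rw [hθ]
  have h₂₁ : (T.θ ((b, c), (a, b))).2.1 = a := by rw [hθ]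
  have h₂₂ : (T.θ ((b, c), (a, b))).2.2 = m := by rw [hθ]
  have := D.theta ((b, c), (a, b)) hbc hab rfl e f
    (eqToHom (congrArg D.ob h₂₁) ≫ e' ≫ eqToHom (congrArg D.ob h₂₂.symm))
    (eqToHom (congrArg D.ob h₁₁) ≫ f' ≫ eqToHom (congrArg D.ob h₁₂.symm))
    he hf (by simp [G.d_comp, G.d_eqToHom, he']) (by simp [G.d_comp, G.d_eqToHom, hf'])
  simpa using this

theorem comp_eq_comp_iff {x y z w : Λ} {f : x ⟶ y} {e : y ⟶ z} {e' : x ⟶ w} {f' : w ⟶ z}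
    (hf : G.d f = (0, 1)) (he : G.d e = (1, 0)) (he' : G.d e' = (1, 0)) (hf' : G.d f' = (0, 1)) :
    f ≫ e = e' ≫ f' ↔ T.θ ((D.ob.symm y, D.ob.symm z), (D.ob.symm x, D.ob.symm y)) =
      ((D.ob.symm w, D.ob.symm z), (D.ob.symm x, D.ob.symm w)) := by
  obtain ⟨a, rfl⟩ := D.ob.surjective x
  obtain ⟨b, rfl⟩ := D.ob.surjective y
  obtain ⟨c, rfl⟩ := D.ob.surjective z
  obtain ⟨m, rfl⟩ := D.ob.surjective w
  simp only [Equiv.symm_apply_apply]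
  have hbc := (D.mem₁ b c).mpr ⟨e, he⟩
  have hab := (D.mem₂ a b).mpr ⟨f, hf⟩
  refine ⟨fun hsq => ?_, fun hθ => D.comp_eq_comp_of_θ_eq hbc hab hθ hf he he' hf'⟩
  obtain ⟨m₀, hθ⟩ := T.exists_θ_eq hbc hab
  obtain ⟨hm₀c, ham₀⟩ := T.mem_of_θ_eq hbc hab hθ
  obtain ⟨e₀, he₀⟩ := (D.mem₁ a m₀).mp ham₀
  obtain ⟨f₀, hf₀⟩ := (D.mem₂ m₀ c).mp hm₀c
  have hsq₀ := D.comp_eq_comp_of_θ_eq hbc hab hθ hf he he₀ hf₀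
  have hm := congrArg Sigma.fst (G.factor_unique (hsq₀.symm.trans hsq) (he₀.trans he'.symm))
  rw [hθ, D.ob.injective hm]

theorem isHom_of_functor (Φ : Λ ⥤ Λ') (hΦ : ∀ {x y : Λ} (f : x ⟶ y), G'.d (Φ.map f) = G.d f) :
    T.IsHom T' (fun v => D'.ob.symm (Φ.obj (D.ob v))) where
  mem_E₁ {a b} hab := by
    obtain ⟨f, hf⟩ := (D.mem₁ a b).mp hab
    exact (D'.mem_E₁_iff _ _).mpr ⟨Φ.map f, by rw [hΦ, hf]⟩
  mem_E₂ {a b} hab := by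
    obtain ⟨f, hf⟩ := (D.mem₂ a b).mp hab
    exact (D'.mem_E₂_iff _ _).mpr ⟨Φ.map f, by rw [hΦ, hf]⟩
  θ_eq {a b c m} hbc hab hθ := by
    obtain ⟨hmc, ham⟩ := T.mem_of_θ_eq hbc hab hθ
    obtain ⟨e, he⟩ := (D.mem₁ b c).mp hbc
    obtain ⟨f, hf⟩ := (D.mem₂ a b).mp hab
    obtain ⟨e', he'⟩ := (D.mem₁ a m).mp ham
    obtain ⟨f', hf'⟩ := (D.mem₂ m c).mp hmc
    have hsq := D.comp_eq_comp_of_θ_eq hbc hab hθ hf he he' hf'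
    refine (D'.comp_eq_comp_iff (by rw [hΦ, hf]) (by rw [hΦ, he]) (by rw [hΦ, he'])
      (by rw [hΦ, hf'])).mp ?_
    rw [← Φ.map_comp, ← Φ.map_comp, hsq]

theorem exists_functor_of_isHom {s : V → V} (hs : T.IsHom T' s) :
    ∃ Φ : Λ ⥤ Λ', (∀ x, Φ.obj x = D'.ob (s (D.ob.symm x))) ∧
      ∀ {x y : Λ} (f : x ⟶ y), G'.d (Φ.map f) = G.d f := by
  let F₀ : Λ → Λ' := fun x => D'.ob (s (D.ob.symm x))
  have hedge : ∀ {x y : Λ} (a : x ⟶ y), G.size a = 1 → ∃ g : F₀ x ⟶ F₀ y, G'.d g = G.d a := by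
    intro x y a ha
    rcases (G.size_eq_one_iff a).mp ha with h | h <;> rw [h]
    · exact (D'.mem₁ _ _).mp (hs.mem_E₁ ((D.mem_E₁_iff x y).mpr ⟨a, h⟩))
    · exact (D'.mem₂ _ _).mp (hs.mem_E₂ ((D.mem_E₂_iff x y).mpr ⟨a, h⟩))
  choose φ hφd using @hedge
  have square : ∀ {x y w z : Λ} (f : x ⟶ y) (e : y ⟶ z) (e' : x ⟶ w) (f' : w ⟶ z)
      (hf : G.size f = 1) (he : G.size e = 1) (he' : G.size e' = 1) (hf' : G.size f' = 1),
      G.d f = (0, 1) → G.d e = (1, 0) → G.d e' = (1, 0) → G.d f' = (0, 1) → f ≫ e = e' ≫ f' →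
      φ f hf ≫ φ e he = φ e' he' ≫ φ f' hf' := by
    intro x y w z f e e' f' _ _ _ _ hfd hed he'd hf'd hsq
    refine (D'.comp_eq_comp_iff (by rw [hφd, hfd]) (by rw [hφd, hed]) (by rw [hφd, he'd])
      (by rw [hφd, hf'd])).mpr ?_
    simp only [F₀, Equiv.symm_apply_apply]
    exact hs.θ_eq ((D.mem_E₁_iff _ _).mpr ⟨e, hed⟩) ((D.mem_E₂_iff _ _).mpr ⟨f, hfd⟩)
      ((D.comp_eq_comp_iff hfd hed he'd hf'd).mp hsq)
  have hφ : G.RespectsSquares φ := by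
    intro x y y' z a b a' b' ha hb ha' hb' h
    rcases G.comp_eq_comp_cases ha hb ha' hb' h with h | ⟨h₁, h₂, h₃, h₄⟩ | ⟨h₁, h₂, h₃, h₄⟩
    · cases h; rfl
    · exact square a b a' b' ha hb ha' hb' h₁ h₂ h₃ h₄ h
    · exact (square a' b' a b ha' hb' ha hb h₃ h₄ h₁ h₂ h.symm).symm
  exact ⟨G.lift F₀ hφ, fun _ => rfl, G.d_liftMap G' F₀ hφ hφd⟩

end DefiningTriple

/-- Theorem A.1: two defining triples are equivalent if and only
if the associated 2-graphs are isomorphic as `ℕ²`-graded categories. -/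
theorem stmt13 {V : Type*} [Fintype V] [DecidableEq V]
    {Λ₁ Λ₂ : Type*} [Category Λ₁] [Category Λ₂]
    (G₁ : TwoGraphStr Λ₁) (G₂ : TwoGraphStr Λ₂)
    (T₁ T₂ : Triple V)
    (h₁ : IsDefiningTriple G₁ T₁) (h₂ : IsDefiningTriple G₂ T₂) :
    TripleEquiv T₁ T₂ ↔
      ∃ (Φ : Λ₁ ⥤ Λ₂) (Ψ : Λ₂ ⥤ Λ₁), Φ ⋙ Ψ = 𝟭 Λ₁ ∧ Ψ ⋙ Φ = 𝟭 Λ₂ ∧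
        ∀ {x y : Λ₁} (f : x ⟶ y), G₂.d (Φ.map f) = G₁.d f := by
  obtain ⟨D₁⟩ := h₁.nonempty
  obtain ⟨D₂⟩ := h₂.nonempty
  rw [tripleEquiv_iff_isHom]
  constructor
  · rintro ⟨σ, hσ, hσ'⟩
    obtain ⟨Φ, hΦobj, hΦ⟩ := D₁.exists_functor_of_isHom D₂ hσ'
    obtain ⟨Ψ, hΨobj, hΨ⟩ := D₂.exists_functor_of_isHom D₁ hσ
    refine ⟨Φ, Ψ, G₁.functor_ext D₁.hom_ext_of_size_eq_one (fun x => ?_)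
      (fun f => (hΨ _).trans (hΦ f)) (fun f => rfl), G₂.functor_ext D₂.hom_ext_of_size_eq_one
      (fun x => ?_) (fun f => (hΦ _).trans (hΨ f)) (fun f => rfl), hΦ⟩ <;>
    simp [hΦobj, hΨobj]
  · rintro ⟨Φ, Ψ, hΦΨ, hΨΦ, hΦ⟩
    have hΨ : ∀ {x y : Λ₂} (g : x ⟶ y), G₁.d (Ψ.map g) = G₂.d g :=
      G₁.d_map_of_comp_eq_id G₂ hΦ hΨΦ
    have hΦΨx := Functor.congr_obj hΦΨ
    have hΨΦx := Functor.congr_obj hΨΦ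
    simp only [Functor.comp_obj, Functor.id_obj] at hΦΨx hΨΦx
    exact ⟨⟨fun v => D₁.ob.symm (Ψ.obj (D₂.ob v)), fun v => D₂.ob.symm (Φ.obj (D₁.ob v)),
      fun v => by simp [hΨΦx], fun v => by simp [hΦΨx]⟩,
      D₂.isHom_of_functor D₁ Ψ hΨ, D₁.isHom_of_functor D₂ Φ hΦ⟩
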